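/- arXiv:1803.01570 — 3 statements merged into one kernel-verified Lean document; each statement's English description precedes it below -/
import Mathlib

section
/- Let D, N be positive integers, let x_1, …, x_N ∈ ℝ^D, let s_1, …, s_N ∈ {−1, +1}, let λ' > 0, and let ‖·‖ be any norm on ℝ^D (i.e., a function ℝ^D → ℝ that is nonnegative, vanishes exactly at 0, is absolutely homogeneous, and satisfies the triangle inequality), with dual norm ‖w‖_* := sup { ⟨w, x⟩ : x ∈ ℝ^D, ‖x‖ ≤ 1 }. Assume the training data is non-separable, i.e., there is no w ∈ ℝ^D with s_i ⟨w, x_i⟩ > 0 for all i = 1, …, N. Then the robust optimization problem inf_{w ∈ ℝ^D} sup { Σ_{i=1}^N max(1 − s_i ⟨w, x_i − x̃_i⟩, 0) : x̃_1, …, x̃_N ∈ ℝ^D, Σ_{i=1}^N ‖x̃_i‖ ≤ λ' } and the regularized problem inf_{w ∈ ℝ^D} ( λ' ‖w‖_* + Σ_{i=1}^N max(1 − s_i ⟨w, x_i⟩, 0) ) have the same optimal value, and a vector w ∈ ℝ^D attains the first infimum if and only if it attains the second. -/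
open scoped RealInnerProductSpace

/-!
For fixed `w`, a perturbation `xt` changes the `i`-th hinge term by at most
`|⟪w, xt i⟫| ≤ p (xt i) * ‖w‖_*`, so the robust loss is at most the regularized one.
Conversely, non-separability gives a point `j` with margin `s j * ⟪w, x j⟫ ≤ 0`, whose hinge
term lies on its linear branch; spending the whole budget there, `xt j = λ s j v` with `p v ≤ 1`,
raises the loss by exactly `λ ⟪w, v⟫`, and the supremum over `v` is `λ ‖w‖_*`. So the two
objectives agree pointwise, hence so do their infima and minimizers.
-/

theorem Seminorm.exists_pos_mul_norm_le {E : Type*} [NormedAddCommGroup E] [NormedSpace ℝ E]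
    [FiniteDimensional ℝ E] (p : Seminorm ℝ E) (hp : ∀ v, p v = 0 → v = 0) :
    ∃ c > 0, ∀ v, c * ‖v‖ ≤ p v := by
  rcases subsingleton_or_nontrivial E with hE | hE
  · exact ⟨1, one_pos, fun v => by simp [Subsingleton.elim v 0]⟩
  have hcont : Continuous p := continuousOn_univ.1 (p.convexOn.continuousOn isOpen_univ)
  obtain ⟨v₀, hv₀, hmin⟩ := (isCompact_sphere (0 : E) 1).exists_isMinOn
    (NormedSpace.sphere_nonempty.2 zero_le_one) hcont.continuousOn
  have hv₀_ne : v₀ ≠ 0 := ne_zero_of_mem_unit_sphere ⟨v₀, hv₀⟩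
  refine ⟨p v₀, (apply_nonneg p v₀).lt_of_ne fun h => hv₀_ne (hp v₀ h.symm), fun v => ?_⟩
  rcases eq_or_ne v 0 with rfl | hv
  · simp
  have hnorm : 0 < ‖v‖ := norm_pos_iff.2 hv
  have hmem : ‖v‖⁻¹ • v ∈ Metric.sphere (0 : E) 1 := by
    simp [norm_smul, hnorm.ne']
  have h := hmin hmem
  simp only [Set.mem_ofPred_eq, map_smul_eq_mul, norm_inv, norm_norm] at h
  rwa [le_inv_mul_iff₀ hnorm, mul_comm] at h

namespace Seminorm

variable {E : Type*} [NormedAddCommGroup E] [InnerProductSpace ℝ E]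

noncomputable def dualNorm (p : Seminorm ℝ E) (w : E) : ℝ :=
  sSup {r : ℝ | ∃ v, p v ≤ 1 ∧ r = ⟪w, v⟫}

variable {p : Seminorm ℝ E}

theorem dualNorm_le {w : E} {b : ℝ} (h : ∀ v, p v ≤ 1 → ⟪w, v⟫ ≤ b) : p.dualNorm w ≤ b :=
  csSup_le ⟨0, 0, by simp⟩ fun _ ⟨v, hv, hr⟩ => hr ▸ h v hv

variable [FiniteDimensional ℝ E]

-- Needed because `sSup` of a set unbounded above is the junk value `0`.
theorem bddAbove_inner_unitBall (hp : ∀ v, p v = 0 → v = 0) (w : E) :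
    BddAbove {r : ℝ | ∃ v, p v ≤ 1 ∧ r = ⟪w, v⟫} := by
  obtain ⟨c, hc, hle⟩ := p.exists_pos_mul_norm_le hp
  refine ⟨‖w‖ * c⁻¹, ?_⟩
  rintro r ⟨v, hv, rfl⟩
  have hv' : ‖v‖ ≤ c⁻¹ := by
    rw [← one_div, le_div_iff₀ hc, mul_comm]
    exact (hle v).trans hv
  exact (real_inner_le_norm w v).trans (mul_le_mul_of_nonneg_left hv' (norm_nonneg w))

theorem inner_le_dualNorm (hp : ∀ v, p v = 0 → v = 0) (w : E) {v : E} (hv : p v ≤ 1) :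
    ⟪w, v⟫ ≤ p.dualNorm w :=
  le_csSup (bddAbove_inner_unitBall hp w) ⟨v, hv, rfl⟩

theorem dualNorm_nonneg (hp : ∀ v, p v = 0 → v = 0) (w : E) : 0 ≤ p.dualNorm w := by
  simpa using inner_le_dualNorm hp w (v := 0) (by simp)

theorem inner_le_mul_dualNorm (hp : ∀ v, p v = 0 → v = 0) (w v : E) :
    ⟪w, v⟫ ≤ p v * p.dualNorm w := by
  rcases (apply_nonneg p v).eq_or_lt with h | h
  · rw [← h, hp v h.symm, inner_zero_right, zero_mul]
  have h1 : p ((p v)⁻¹ • v) ≤ 1 := by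
    rw [map_smul_eq_mul, norm_inv, Real.norm_of_nonneg h.le, inv_mul_cancel₀ h.ne']
  have := inner_le_dualNorm hp w h1
  rwa [real_inner_smul_right, inv_mul_le_iff₀ h] at this

theorem abs_inner_le_mul_dualNorm (hp : ∀ v, p v = 0 → v = 0) (w v : E) :
    |⟪w, v⟫| ≤ p v * p.dualNorm w := by
  refine abs_le.2 ⟨?_, inner_le_mul_dualNorm hp w v⟩
  have := inner_le_mul_dualNorm hp w (-v)
  rw [inner_neg_right, map_neg_eq_map] at this
  linarith

end Seminorm

section HingeLoss

variable {E ι : Type*} [NormedAddCommGroup E] [InnerProductSpace ℝ E] [Fintype ι]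

def hingeLoss (x : ι → E) (s : ι → ℝ) (w : E) : ℝ :=
  ∑ i, max (1 - s i * ⟪w, x i⟫) 0

noncomputable def robustHingeLoss (p : Seminorm ℝ E) (lam : ℝ) (x : ι → E) (s : ι → ℝ)
    (w : E) : ℝ :=
  sSup {r : ℝ | ∃ xt : ι → E, ∑ i, p (xt i) ≤ lam ∧ r = hingeLoss (x - xt) s w}

variable {x : ι → E} {s : ι → ℝ} {w : E}

theorem hingeLoss_sub_le (hs : ∀ i, |s i| ≤ 1) (xt : ι → E) :
    hingeLoss (x - xt) s w ≤ hingeLoss x s w + ∑ i, |⟪w, xt i⟫| := by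
  rw [hingeLoss, hingeLoss, ← Finset.sum_add_distrib]
  refine Finset.sum_le_sum fun i _ => ?_
  have hshift : 1 - s i * ⟪w, (x - xt) i⟫ = (1 - s i * ⟪w, x i⟫) + s i * ⟪w, xt i⟫ := by
    rw [Pi.sub_apply, inner_sub_right]; ring
  have hsmall : s i * ⟪w, xt i⟫ ≤ |⟪w, xt i⟫| :=
    calc s i * ⟪w, xt i⟫ ≤ |s i| * |⟪w, xt i⟫| := abs_mul (s i) _ ▸ le_abs_self _
      _ ≤ |⟪w, xt i⟫| := mul_le_of_le_one_left (abs_nonneg _) (hs i)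
  rw [hshift]
  exact max_le (by linarith [le_max_left (1 - s i * ⟪w, x i⟫) 0])
    (by linarith [le_max_right (1 - s i * ⟪w, x i⟫) 0, abs_nonneg ⟪w, xt i⟫])

theorem hingeLoss_sub_single [DecidableEq ι] {j : ι} {u : E} (hs : |s j| = 1)
    (hj : s j * ⟪w, x j⟫ ≤ 1) (hu : 0 ≤ ⟪w, u⟫) :
    hingeLoss (x - Pi.single j (s j • u)) s w = hingeLoss x s w + ⟪w, u⟫ := by
  have hterm : ∀ i, max (1 - s i * ⟪w, (x - Pi.single j (s j • u) : ι → E) i⟫) 0 =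
      max (1 - s i * ⟪w, x i⟫) 0 + (Pi.single j ⟪w, u⟫ : ι → ℝ) i := by
    intro i
    rcases eq_or_ne i j with rfl | hi
    · have hsq : s i * s i = 1 := by rw [← abs_mul_abs_self, hs, one_mul]
      have hexpand : 1 - s i * (⟪w, x i⟫ - s i * ⟪w, u⟫) = 1 - s i * ⟪w, x i⟫ + ⟪w, u⟫ := by
        linear_combination ⟪w, u⟫ * hsq
      simp only [Pi.sub_apply, Pi.single_eq_same, inner_sub_right, real_inner_smul_right]
      rw [hexpand, max_eq_left (by linarith), max_eq_left (by linarith)]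
    · simp [hi]
  simp only [hingeLoss, hterm, Finset.sum_add_distrib, Finset.sum_pi_single', Finset.mem_univ,
    if_true]

variable [FiniteDimensional ℝ E] {p : Seminorm ℝ E} {lam : ℝ}

theorem hingeLoss_sub_le_of_budget (hp : ∀ v, p v = 0 → v = 0) (hs : ∀ i, |s i| ≤ 1)
    {xt : ι → E} (hxt : ∑ i, p (xt i) ≤ lam) :
    hingeLoss (x - xt) s w ≤ lam * p.dualNorm w + hingeLoss x s w :=
  calc hingeLoss (x - xt) s w ≤ hingeLoss x s w + ∑ i, |⟪w, xt i⟫| := hingeLoss_sub_le hs xt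
    _ ≤ hingeLoss x s w + (∑ i, p (xt i)) * p.dualNorm w := by
      rw [Finset.sum_mul]
      gcongr with i
      exact p.abs_inner_le_mul_dualNorm hp w (xt i)
    _ ≤ lam * p.dualNorm w + hingeLoss x s w := by
      linarith [mul_le_mul_of_nonneg_right hxt (p.dualNorm_nonneg hp w)]

theorem hingeLoss_sub_le_robustHingeLoss (hp : ∀ v, p v = 0 → v = 0) (hs : ∀ i, |s i| ≤ 1)
    {xt : ι → E} (hxt : ∑ i, p (xt i) ≤ lam) :
    hingeLoss (x - xt) s w ≤ robustHingeLoss p lam x s w :=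
  le_csSup ⟨_, fun _ ⟨_, hyt, hr⟩ => hr ▸ hingeLoss_sub_le_of_budget hp hs hyt⟩ ⟨xt, hxt, rfl⟩

theorem robustHingeLoss_le (hp : ∀ v, p v = 0 → v = 0) (hs : ∀ i, |s i| ≤ 1) (hlam : 0 ≤ lam) :
    robustHingeLoss p lam x s w ≤ lam * p.dualNorm w + hingeLoss x s w :=
  csSup_le ⟨_, 0, by simpa using hlam, rfl⟩ fun _ ⟨_, hxt, hr⟩ =>
    hr ▸ hingeLoss_sub_le_of_budget hp hs hxt

theorem robustHingeLoss_eq (hp : ∀ v, p v = 0 → v = 0) (hs : ∀ i, |s i| = 1) (hlam : 0 < lam)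
    (hw : ∃ j, s j * ⟪w, x j⟫ ≤ 0) :
    robustHingeLoss p lam x s w = lam * p.dualNorm w + hingeLoss x s w := by
  classical
  obtain ⟨j, hj⟩ := hw
  have hs' : ∀ i, |s i| ≤ 1 := fun i => (hs i).le
  have hhinge : hingeLoss x s w ≤ robustHingeLoss p lam x s w := by
    simpa using hingeLoss_sub_le_robustHingeLoss (xt := 0) hp hs' (by simpa using hlam.le)
  refine (robustHingeLoss_le hp hs' hlam.le).antisymm ?_
  suffices p.dualNorm w ≤ (robustHingeLoss p lam x s w - hingeLoss x s w) / lam by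
    rw [le_div_iff₀ hlam] at this
    linarith
  refine Seminorm.dualNorm_le fun v hv => ?_
  rw [le_div_iff₀ hlam]
  rcases le_or_gt ⟪w, v⟫ 0 with hneg | hpos
  · nlinarith
  have hbudget : ∑ i, p ((Pi.single j (s j • lam • v) : ι → E) i) ≤ lam := by
    simp only [Pi.apply_single (fun _ => p) (fun _ => map_zero p), Finset.sum_pi_single',
      Finset.mem_univ, if_true, map_smul_eq_mul, Real.norm_eq_abs, hs j, abs_of_pos hlam]
    nlinarith
  have hperturb := hingeLoss_sub_le_robustHingeLoss (x := x) (w := w) hp hs' hbudget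
  rw [hingeLoss_sub_single (hs j) (by linarith), real_inner_smul_right] at hperturb
  · linarith
  · rw [real_inner_smul_right]; positivity

end HingeLoss

theorem robust_eq_regularized_general
    (D N : ℕ)
    (x : Fin N → EuclideanSpace ℝ (Fin D)) (s : Fin N → ℝ)
    (hs : ∀ i, s i = 1 ∨ s i = -1)
    (lam : ℝ) (hlam : 0 < lam)
    (n : EuclideanSpace ℝ (Fin D) → ℝ)
    (hn_def : ∀ v, n v = 0 ↔ v = 0)
    (hn_homog : ∀ (c : ℝ) (v), n (c • v) = |c| * n v)
    (hn_tri : ∀ v w, n (v + w) ≤ n v + n w)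
    (hnonsep : ¬ ∃ w : EuclideanSpace ℝ (Fin D), ∀ i, 0 < s i * ⟪w, x i⟫)
    (dualNorm : EuclideanSpace ℝ (Fin D) → ℝ)
    (hdual : ∀ w, dualNorm w = sSup {r : ℝ | ∃ v, n v ≤ 1 ∧ r = ⟪w, v⟫})
    (F G : EuclideanSpace ℝ (Fin D) → ℝ)
    (hF : ∀ w, F w = sSup {r : ℝ | ∃ xt : Fin N → EuclideanSpace ℝ (Fin D),
        (∑ i, n (xt i)) ≤ lam ∧
        r = ∑ i, max (1 - s i * ⟪w, x i - xt i⟫) 0})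
    (hG : ∀ w, G w = lam * dualNorm w + ∑ i, max (1 - s i * ⟪w, x i⟫) 0) :
    (⨅ w, F w) = (⨅ w, G w) ∧
    (∀ w, F w = (⨅ w', F w') ↔ G w = (⨅ w', G w')) := by
  let p : Seminorm ℝ (EuclideanSpace ℝ (Fin D)) :=
    Seminorm.of n hn_tri fun c v => by rw [hn_homog, Real.norm_eq_abs]
  have hs_abs : ∀ i, |s i| = 1 := fun i => by rcases hs i with h | h <;> simp [h]
  push Not at hnonsep
  have hFG : F = G := funext fun w => by
    rw [hF, hG, hdual]
    exact robustHingeLoss_eq (p := p) (fun v => (hn_def v).1) hs_abs hlam (hnonsep w)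
  subst hFG
  exact ⟨rfl, fun _ => Iff.rfl⟩

/-- Equivalence (same optimal value and same minimizers) of the robust
optimization problem with perturbations bounded in an arbitrary norm, and the
regularized problem with the dual norm, under non-separability of the data. -/
theorem robust_eq_regularized
    (D N : ℕ) (hD : 0 < D) (hN : 0 < N)
    (x : Fin N → EuclideanSpace ℝ (Fin D)) (s : Fin N → ℝ)
    (hs : ∀ i, s i = 1 ∨ s i = -1)
    (lam : ℝ) (hlam : 0 < lam)
    (n : EuclideanSpace ℝ (Fin D) → ℝ)
    (hn_nonneg : ∀ v, 0 ≤ n v)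
    (hn_def : ∀ v, n v = 0 ↔ v = 0)
    (hn_homog : ∀ (c : ℝ) (v), n (c • v) = |c| * n v)
    (hn_tri : ∀ v w, n (v + w) ≤ n v + n w)
    (hnonsep : ¬ ∃ w : EuclideanSpace ℝ (Fin D), ∀ i, 0 < s i * ⟪w, x i⟫)
    (dualNorm : EuclideanSpace ℝ (Fin D) → ℝ)
    (hdual : ∀ w, dualNorm w = sSup {r : ℝ | ∃ v, n v ≤ 1 ∧ r = ⟪w, v⟫})
    (F G : EuclideanSpace ℝ (Fin D) → ℝ)
    (hF : ∀ w, F w = sSup {r : ℝ | ∃ xt : Fin N → EuclideanSpace ℝ (Fin D),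
        (∑ i, n (xt i)) ≤ lam ∧
        r = ∑ i, max (1 - s i * ⟪w, x i - xt i⟫) 0})
    (hG : ∀ w, G w = lam * dualNorm w + ∑ i, max (1 - s i * ⟪w, x i⟫) 0) :
    (⨅ w, F w) = (⨅ w, G w) ∧
    (∀ w, F w = (⨅ w', F w') ↔ G w = (⨅ w', G w')) :=
  robust_eq_regularized_general D N x s hs lam hlam n hn_def hn_homog hn_tri hnonsep dualNorm hdual
    F G hF hG
end

section
/- Let D, N be positive integers, let x_1, …, x_N ∈ ℝ^D, let s_1, …, s_N ∈ {−1, +1}, and let λ' > 0. Assume the data is non-separable, i.e., there is no w ∈ ℝ^D with s_i ⟨w, x_i⟩ > 0 for all i. Consider perturbations bounded in the ℓ∞ norm ‖x̃‖_∞ := max_{1 ≤ d ≤ D} |x̃_d|. Then inf_{w ∈ ℝ^D} sup { Σ_{i=1}^N max(1 − s_i ⟨w, x_i − x̃_i⟩, 0) : x̃_1, …, x̃_N ∈ ℝ^D, Σ_{i=1}^N ‖x̃_i‖_∞ ≤ λ' } = inf_{w ∈ ℝ^D} ( λ' ‖w‖_1 + Σ_{i=1}^N max(1 − s_i ⟨w,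 x_i⟩, 0) ), where ‖w‖_1 := Σ_{d=1}^D |w_d|, and a vector w attains the first infimum if and only if it attains the second. -/
open scoped RealInnerProductSpace

/-!
For a fixed `w`, Hölder's inequality `|⟪w, v⟫| ≤ ‖v‖_∞ ‖w‖_1` shows that spending the budget `λ'`
on perturbations raises the total hinge loss by at most `λ' ‖w‖_1`. Non-separability provides a
sample with margin `s_i ⟪w, x_i⟫ ≤ 0`, whose hinge is active; putting the whole budget on that
sample, along the sign vector of `w`, raises its loss by exactly `λ' ‖w‖_1`. Hence the robust
objective equals the `ℓ1`-regularized one for every `w`, so the two problems share their infimum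
and their minimizers.
-/

section Holder

variable {ι : Type*} [Fintype ι]

theorem inner_eq_sum_mul (w v : EuclideanSpace ℝ ι) : ⟪w, v⟫ = ∑ d, w d * v d := by
  simp only [PiLp.inner_apply, RCLike.inner_apply, conj_trivial, mul_comm]

theorem abs_inner_le_iSup_abs_mul_sum_abs (w v : EuclideanSpace ℝ ι) :
    |⟪w, v⟫| ≤ (⨆ d, |v d|) * ∑ d, |w d| := by
  rw [inner_eq_sum_mul, Finset.mul_sum]
  refine (Finset.abs_sum_le_sum_abs _ _).trans (Finset.sum_le_sum fun d _ => ?_)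
  rw [abs_mul, mul_comm]
  exact mul_le_mul_of_nonneg_right
    (le_ciSup (f := fun d => |v d|) (Finite.bddAbove_range _) d) (abs_nonneg _)

theorem exists_iSup_abs_le_inner_eq_mul_sum_abs (w : EuclideanSpace ℝ ι) (c : ℝ) :
    ∃ v : EuclideanSpace ℝ ι, (⨆ d, |v d|) ≤ |c| ∧ ⟪w, v⟫ = c * ∑ d, |w d| := by
  refine ⟨WithLp.toLp 2 fun d => c * SignType.sign (w d), ?_, ?_⟩
  · refine Real.iSup_le (fun d => ?_) (abs_nonneg c)
    have hsign : |((SignType.sign (w d) : SignType) : ℝ)| ≤ 1 := by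
      rcases SignType.sign (w d) with _ | _ | _ <;> simp
    rw [PiLp.toLp_apply, abs_mul]
    exact mul_le_of_le_one_right (abs_nonneg c) hsign
  · rw [inner_eq_sum_mul, Finset.mul_sum]
    refine Finset.sum_congr rfl fun d _ => ?_
    rw [PiLp.toLp_apply, ← self_mul_sign (w d)]
    ring

end Holder

section RobustHinge

variable {ι n : Type*} [Fintype ι] [Fintype n]
  (x : n → EuclideanSpace ℝ ι) (s : n → ℝ) (w : EuclideanSpace ℝ ι)

theorem sum_hinge_sub_le {lam : ℝ} (hs : ∀ i, |s i| ≤ 1) (xt : n → EuclideanSpace ℝ ι)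
    (hbudget : ∑ i, ⨆ d, |xt i d| ≤ lam) :
    ∑ i, max (1 - s i * ⟪w, x i - xt i⟫) 0
      ≤ lam * ∑ d, |w d| + ∑ i, max (1 - s i * ⟪w, x i⟫) 0 := by
  set L := ∑ d, |w d|
  have hL : 0 ≤ L := Finset.sum_nonneg fun d _ => abs_nonneg _
  have hterm : ∀ i, max (1 - s i * ⟪w, x i - xt i⟫) 0
      ≤ max (1 - s i * ⟪w, x i⟫) 0 + (⨆ d, |xt i d|) * L := by
    intro i
    have hshift : s i * ⟪w, xt i⟫ ≤ (⨆ d, |xt i d|) * L :=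
      calc s i * ⟪w, xt i⟫ ≤ |s i| * |⟪w, xt i⟫| := (le_abs_self _).trans (abs_mul _ _).le
        _ ≤ |⟪w, xt i⟫| := mul_le_of_le_one_left (abs_nonneg _) (hs i)
        _ ≤ (⨆ d, |xt i d|) * L := abs_inner_le_iSup_abs_mul_sum_abs _ _
    have hnonneg : 0 ≤ (⨆ d, |xt i d|) * L :=
      mul_nonneg (Real.iSup_nonneg fun d => abs_nonneg _) hL
    rw [← max_add_add_right, zero_add, inner_sub_right]
    exact max_le_max (by linarith) hnonneg
  calc ∑ i, max (1 - s i * ⟪w, x i - xt i⟫) 0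
      ≤ ∑ i, (max (1 - s i * ⟪w, x i⟫) 0 + (⨆ d, |xt i d|) * L) :=
        Finset.sum_le_sum fun i _ => hterm i
    _ = (∑ i, ⨆ d, |xt i d|) * L + ∑ i, max (1 - s i * ⟪w, x i⟫) 0 := by
        rw [Finset.sum_add_distrib, Finset.sum_mul, add_comm]
    _ ≤ lam * L + ∑ i, max (1 - s i * ⟪w, x i⟫) 0 := by
        gcongr

theorem exists_sum_hinge_sub_eq {lam : ℝ} (hlam : 0 ≤ lam) {i₀ : n} (hs₀ : |s i₀| = 1)
    (hmargin : s i₀ * ⟪w, x i₀⟫ ≤ 1) :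
    ∃ xt : n → EuclideanSpace ℝ ι, ∑ i, ⨆ d, |xt i d| ≤ lam ∧
      ∑ i, max (1 - s i * ⟪w, x i - xt i⟫) 0
        = lam * ∑ d, |w d| + ∑ i, max (1 - s i * ⟪w, x i⟫) 0 := by
  classical
  set L := ∑ d, |w d|
  obtain ⟨u, hu, hwu⟩ := exists_iSup_abs_le_inner_eq_mul_sum_abs w (lam * s i₀)
  rw [abs_mul, hs₀, abs_of_nonneg hlam, mul_one] at hu
  refine ⟨Pi.single i₀ u, ?_, ?_⟩
  · rw [Fintype.sum_eq_single i₀ fun i hi => by simp [hi]]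
    simpa using hu
  have hterm : ∀ i, max (1 - s i * ⟪w, x i - (Pi.single i₀ u : n → EuclideanSpace ℝ ι) i⟫) 0
      = max (1 - s i * ⟪w, x i⟫) 0 + (Pi.single i₀ (lam * L) : n → ℝ) i := by
    intro i
    rcases eq_or_ne i i₀ with rfl | hi
    · have hsq : s i * s i = 1 := by rw [← abs_mul_abs_self, hs₀, one_mul]
      have hloss : 1 - s i * ⟪w, x i - u⟫ = 1 - s i * ⟪w, x i⟫ + lam * L := by
        rw [inner_sub_right, hwu]
        linear_combination lam * L * hsq
      have hbonus : 0 ≤ lam * L := mul_nonneg hlam (Finset.sum_nonneg fun d _ => abs_nonneg _)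
      rw [Pi.single_eq_same, Pi.single_eq_same, hloss, max_eq_left, max_eq_left] <;> linarith
    · simp [hi]
  rw [Finset.sum_congr rfl fun i _ => hterm i, Finset.sum_add_distrib, Finset.sum_pi_single',
    if_pos (Finset.mem_univ _), add_comm]

theorem sSup_sum_hinge_sub_eq {lam : ℝ} (hs : ∀ i, |s i| = 1) (hlam : 0 ≤ lam)
    (hmargin : ∃ i, s i * ⟪w, x i⟫ ≤ 1) :
    sSup {r : ℝ | ∃ xt : n → EuclideanSpace ℝ ι, (∑ i, ⨆ d, |xt i d|) ≤ lam ∧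
        r = ∑ i, max (1 - s i * ⟪w, x i - xt i⟫) 0}
      = lam * ∑ d, |w d| + ∑ i, max (1 - s i * ⟪w, x i⟫) 0 := by
  obtain ⟨i₀, hi₀⟩ := hmargin
  obtain ⟨xt, hbudget, hloss⟩ := exists_sum_hinge_sub_eq x s w hlam (hs i₀) hi₀
  refine IsGreatest.csSup_eq ⟨⟨xt, hbudget, hloss.symm⟩, ?_⟩
  rintro r ⟨xt', hbudget', rfl⟩
  exact sum_hinge_sub_le x s w (fun i => (hs i).le) xt' hbudget'

end RobustHinge

theorem robust_linf_eq_l1_regularized_general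
    (D N : ℕ)
    (x : Fin N → EuclideanSpace ℝ (Fin D)) (s : Fin N → ℝ)
    (hs : ∀ i, s i = 1 ∨ s i = -1)
    (lam : ℝ) (hlam : 0 < lam)
    (hnonsep : ¬ ∃ w : EuclideanSpace ℝ (Fin D), ∀ i, 0 < s i * ⟪w, x i⟫)
    (F G : EuclideanSpace ℝ (Fin D) → ℝ)
    (hF : ∀ w, F w = sSup {r : ℝ | ∃ xt : Fin N → EuclideanSpace ℝ (Fin D),
        (∑ i, ⨆ d, |xt i d|) ≤ lam ∧
        r = ∑ i, max (1 - s i * ⟪w, x i - xt i⟫) 0})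
    (hG : ∀ w, G w = lam * (∑ d, |w d|) + ∑ i, max (1 - s i * ⟪w, x i⟫) 0) :
    (⨅ w, F w) = (⨅ w, G w) ∧
    (∀ w, F w = (⨅ w', F w') ↔ G w = (⨅ w', G w')) := by
  have habs : ∀ i, |s i| = 1 := fun i => by rcases hs i with h | h <;> simp [h]
  have hFG : ∀ w, F w = G w := fun w => by
    obtain ⟨i, hi⟩ : ∃ i, s i * ⟪w, x i⟫ ≤ 0 := by simpa using not_exists.mp hnonsep w
    rw [hF, hG]
    exact sSup_sum_hinge_sub_eq x s w habs hlam.le ⟨i, hi.trans zero_le_one⟩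
  have hinf : ⨅ w, F w = ⨅ w, G w := iInf_congr hFG
  exact ⟨hinf, fun w => by rw [hFG w, hinf]⟩

/-- Under non-separability of the data, the robust optimization problem with
perturbations bounded in total `ℓ∞` norm by `λ'` has the same optimal value and the same set of
minimizers as the `ℓ1`-regularized hinge-loss problem. -/
theorem robust_linf_eq_l1_regularized
    (D N : ℕ) (hD : 0 < D) (hN : 0 < N)
    (x : Fin N → EuclideanSpace ℝ (Fin D)) (s : Fin N → ℝ)
    (hs : ∀ i, s i = 1 ∨ s i = -1)
    (lam : ℝ) (hlam : 0 < lam)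
    (hnonsep : ¬ ∃ w : EuclideanSpace ℝ (Fin D), ∀ i, 0 < s i * ⟪w, x i⟫)
    (F G : EuclideanSpace ℝ (Fin D) → ℝ)
    (hF : ∀ w, F w = sSup {r : ℝ | ∃ xt : Fin N → EuclideanSpace ℝ (Fin D),
        (∑ i, ⨆ d, |xt i d|) ≤ lam ∧
        r = ∑ i, max (1 - s i * ⟪w, x i - xt i⟫) 0})
    (hG : ∀ w, G w = lam * (∑ d, |w d|) + ∑ i, max (1 - s i * ⟪w, x i⟫) 0) :
    (⨅ w, F w) = (⨅ w, G w) ∧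
    (∀ w, F w = (⨅ w', F w') ↔ G w = (⨅ w', G w')) :=
  robust_linf_eq_l1_regularized_general D N x s hs lam hlam hnonsep F G hF hG
end

section
/- Let g : ℝ^D → ℝ and h : ℝ^D → ℝ be convex functions. Then the union, over all pairs (λ_1, λ_2) of nonnegative real numbers not both zero, of the sets of global minimizers of w ↦ λ_1 g(w) + λ_2 h(w), coincides with the set of weakly efficient solutions of the pair (g, h). -/
/-!
A minimizer of `l₁ g + l₂ h` with `l₁, l₂ ≥ 0` minimizes `g` or `h` when one weight vanishes and is
Pareto efficient when both are positive. Conversely, if `w` is Pareto efficient, the open lower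
quadrant at `(g w, h w)` misses the upper image `{p | ∃ w', (g w', h w') ≤ p}`, which is convex
because `g` and `h` are. A line separating the two (Hahn–Banach) has a normal `(l₁, l₂)` with
nonnegative entries, since a linear form bounded above on a quadrant cannot decrease along it, and
`w` minimizes `l₁ g + l₂ h`.
-/

/-- A point `w` is Pareto efficient for the pair of objectives `(g, h)` if there is no `w'`
which is at least as good on both objectives and strictly better on at least one. -/
def ParetoEfficient {E : Type*} (g h : E → ℝ) (w : E) : Prop :=
  ¬ ∃ w', (g w' ≤ g w ∧ h w' ≤ h w) ∧ (g w' < g w ∨ h w' < h w)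

/-- A point `w` is weakly efficient for the pair of objectives `(g, h)` if it is a global
minimizer of `g`, or a global minimizer of `h`, or Pareto efficient for `(g, h)`. -/
def WeaklyEfficient {E : Type*} (g h : E → ℝ) (w : E) : Prop :=
  (∀ w', g w ≤ g w') ∨ (∀ w', h w ≤ h w') ∨ ParetoEfficient g h w

open Set

section Convex

variable {𝕜 E β : Type*} [Semiring 𝕜] [PartialOrder 𝕜] [AddCommMonoid E] [Module 𝕜 E]

theorem ConvexOn.prodMk {α : Type*} [AddCommMonoid α] [PartialOrder α] [SMul 𝕜 α]
    [AddCommMonoid β] [PartialOrder β] [SMul 𝕜 β] {s : Set E} {f : E → α} {g : E → β}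
    (hf : ConvexOn 𝕜 s f) (hg : ConvexOn 𝕜 s g) : ConvexOn 𝕜 s fun x ↦ (f x, g x) :=
  ⟨hf.1, fun _ hx _ hy _ _ ha hb hab ↦ ⟨hf.2 hx hy ha hb hab, hg.2 hx hy ha hb hab⟩⟩

theorem ConvexOn.convex_upperImage [AddCommMonoid β] [PartialOrder β] [IsOrderedAddMonoid β]
    [Module 𝕜 β] [PosSMulMono 𝕜 β] {F : E → β} (hF : ConvexOn 𝕜 univ F) :
    Convex 𝕜 {p | ∃ x, F x ≤ p} := by
  have : {p | ∃ x, F x ≤ p} = LinearMap.snd 𝕜 E β '' {q | q.1 ∈ univ ∧ F q.1 ≤ q.2} := by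
    ext p; simp
  rw [this]
  exact hF.convex_epigraph.linear_image _

end Convex

theorem nonneg_of_forall_sub_mul_lt {c l u : ℝ} (h : ∀ t, 0 ≤ t → c - t * l < u) : 0 ≤ l := by
  by_contra! hl
  have := h (|u - c| / -l) (div_nonneg (abs_nonneg _) (by linarith))
  rw [sub_eq_add_neg, ← mul_neg, div_mul_cancel₀ _ (neg_ne_zero.2 hl.ne)] at this
  linarith [le_abs_self (u - c)]

theorem exists_nonneg_weights_of_disjoint_Iio_prod_Iio {C : Set (ℝ × ℝ)} (hC : Convex ℝ C)
    (hCne : C.Nonempty) {a b : ℝ} (hdisj : Disjoint (Iio a ×ˢ Iio b) C) :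
    ∃ l₁ l₂ : ℝ, 0 ≤ l₁ ∧ 0 ≤ l₂ ∧ ¬(l₁ = 0 ∧ l₂ = 0) ∧
      ∀ p ∈ C, l₁ * a + l₂ * b ≤ l₁ * p.1 + l₂ * p.2 := by
  obtain ⟨f, u, hf_lt, hf_ge⟩ :=
    geometric_hahn_banach_open ((convex_Iio a).prod (convex_Iio b)) (isOpen_Iio.prod isOpen_Iio)
      hC hdisj
  have hf : ∀ p : ℝ × ℝ, f p = f (1, 0) * p.1 + f (0, 1) * p.2 := fun p ↦ by
    conv_lhs => rw [show p = p.1 • ((1 : ℝ), (0 : ℝ)) + p.2 • ((0 : ℝ), (1 : ℝ)) by ext <;> simp]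
    simp only [map_add, map_smul, smul_eq_mul, mul_comm]
  have hlt : ∀ x < a, ∀ y < b, f (1, 0) * x + f (0, 1) * y < u := fun x hx y hy ↦
    hf (x, y) ▸ hf_lt (x, y) ⟨hx, hy⟩
  have hab : f (1, 0) * a + f (0, 1) * b ≤ u := by
    have hmem : (a, b) ∈ closure (Iio a ×ˢ Iio b) := by
      rw [closure_prod_eq, closure_Iio, closure_Iio]
      exact ⟨self_mem_Iic, self_mem_Iic⟩
    exact hf (a, b) ▸ closure_lt_subset_le f.continuous continuous_const
      (closure_mono (fun p hp ↦ hf_lt p hp) hmem)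
  have hl₁ : 0 ≤ f (1, 0) :=
    nonneg_of_forall_sub_mul_lt (c := f (1, 0) * (a - 1) + f (0, 1) * (b - 1)) fun t ht ↦ by
      linarith [hlt (a - 1 - t) (by linarith) (b - 1) (by linarith)]
  have hl₂ : 0 ≤ f (0, 1) :=
    nonneg_of_forall_sub_mul_lt (c := f (1, 0) * (a - 1) + f (0, 1) * (b - 1)) fun t ht ↦ by
      linarith [hlt (a - 1) (by linarith) (b - 1 - t) (by linarith)]
  refine ⟨f (1, 0), f (0, 1), hl₁, hl₂, ?_, fun p hp ↦ hab.trans (hf p ▸ hf_ge p hp)⟩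
  rintro ⟨h₁, h₂⟩
  obtain ⟨p, hp⟩ := hCne
  have hu_pos := hlt (a - 1) (by linarith) (b - 1) (by linarith)
  have hu_nonpos := hf p ▸ hf_ge p hp
  rw [h₁, h₂] at hu_pos hu_nonpos
  linarith

section Efficiency

variable {E : Type*} {g h : E → ℝ} {w : E}

theorem weaklyEfficient_of_forall_weighted_sum_le {l₁ l₂ : ℝ} (h₁ : 0 ≤ l₁) (h₂ : 0 ≤ l₂)
    (hne : ¬(l₁ = 0 ∧ l₂ = 0)) (hmin : ∀ w', l₁ * g w + l₂ * h w ≤ l₁ * g w' + l₂ * h w') :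
    WeaklyEfficient g h w := by
  rcases h₁.eq_or_lt with rfl | h₁
  · have h₂ : 0 < l₂ := h₂.lt_of_ne' fun h₂ ↦ hne ⟨rfl, h₂⟩
    exact Or.inr (Or.inl fun w' ↦ le_of_mul_le_mul_left (by simpa using hmin w') h₂)
  rcases h₂.eq_or_lt with rfl | h₂
  · exact Or.inl fun w' ↦ le_of_mul_le_mul_left (by simpa using hmin w') h₁
  · refine Or.inr (Or.inr ?_)
    rintro ⟨w', ⟨hg, hh⟩, hlt | hlt⟩ <;> nlinarith [hmin w']

theorem ParetoEfficient.disjoint_Iio_prod_Iio (hw : ParetoEfficient g h w) :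
    Disjoint (Iio (g w) ×ˢ Iio (h w)) {p | ∃ w', (g w', h w') ≤ p} :=
  disjoint_left.2 fun _ ⟨hp₁, hp₂⟩ ⟨w', hw'⟩ ↦
    hw ⟨w', ⟨hw'.1.trans hp₁.le, hw'.2.trans hp₂.le⟩, Or.inl (hw'.1.trans_lt hp₁)⟩

theorem WeaklyEfficient.exists_weighted_sum_le [AddCommMonoid E] [Module ℝ E]
    (hg : ConvexOn ℝ univ g) (hh : ConvexOn ℝ univ h) (hw : WeaklyEfficient g h w) :
    ∃ l₁ l₂ : ℝ, 0 ≤ l₁ ∧ 0 ≤ l₂ ∧ ¬(l₁ = 0 ∧ l₂ = 0) ∧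
      ∀ w', l₁ * g w + l₂ * h w ≤ l₁ * g w' + l₂ * h w' := by
  rcases hw with hmin | hmin | hpar
  · exact ⟨1, 0, zero_le_one, le_rfl, by simp, by simpa using hmin⟩
  · exact ⟨0, 1, le_rfl, zero_le_one, by simp, by simpa using hmin⟩
  · obtain ⟨l₁, l₂, h₁, h₂, hne, hle⟩ := exists_nonneg_weights_of_disjoint_Iio_prod_Iio
      (hg.prodMk hh).convex_upperImage ⟨_, w, le_rfl⟩ hpar.disjoint_Iio_prod_Iio
    exact ⟨l₁, l₂, h₁, h₂, hne, fun w' ↦ hle _ ⟨w', le_rfl⟩⟩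

end Efficiency

/-- For convex `g, h : ℝ^D → ℝ`, the union over all pairs `(λ₁, λ₂)` of
nonnegative reals, not both zero, of the sets of global minimizers of `λ₁ g + λ₂ h` coincides
with the set of weakly efficient solutions of the pair `(g, h)`. -/
theorem union_argmin_weighted_sum_eq_weaklyEfficient
    (D : ℕ) (g h : EuclideanSpace ℝ (Fin D) → ℝ)
    (hg : ConvexOn ℝ Set.univ g) (hh : ConvexOn ℝ Set.univ h) :
    {w : EuclideanSpace ℝ (Fin D) | ∃ l₁ l₂ : ℝ, 0 ≤ l₁ ∧ 0 ≤ l₂ ∧ ¬(l₁ = 0 ∧ l₂ = 0) ∧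
        ∀ w', l₁ * g w + l₂ * h w ≤ l₁ * g w' + l₂ * h w'} =
    {w : EuclideanSpace ℝ (Fin D) | WeaklyEfficient g h w} := by
  ext w
  exact ⟨fun ⟨_, _, h₁, h₂, hne, hmin⟩ ↦ weaklyEfficient_of_forall_weighted_sum_le h₁ h₂ hne hmin,
    fun hw ↦ hw.exists_weighted_sum_le hg hh⟩
end
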